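/- Let ψ be holomorphic on D and continuous on the closed unit disc, φ a holomorphic self-map of D with no fixed point in D. Suppose that |ψ(z)|·((1-|z|²)/(1-|φ(z)|²))^{α/2} → 0 as |z| → 1⁻ for some α ∈ (0,1). Then ψ vanishes at some point of the unit circle. -/

import Mathlib

/-!
If `‖φ z‖ < ‖z‖` near the unit circle, then `φ` maps some closed disc of radius `s < 1` into
its interior. A holomorphic self-map of the disc with relatively compact image is a strict
contraction of the pseudo-hyperbolic distance (Schwarz–Pick plus a dilation estimate), so its
orbits converge to a fixed point (Earle–Hamilton). Hence, as `φ` has no fixed point, there are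
points `z` arbitrarily close to the circle with `‖z‖ ≤ ‖φ z‖`; there the weight
`((1 - ‖z‖²) / (1 - ‖φ z‖²)) ^ (α / 2)` is at least `1`, so `ψ z → 0` along them, and a cluster
point on the circle is a zero of `ψ`.
-/

open Metric Complex ComplexConjugate Filter Topology Set

/-- The automorphism of the unit disc sending `a` to `0`; `‖mobius a z‖` is the
pseudo-hyperbolic distance between `a` and `z`. -/
noncomputable def mobius (a z : ℂ) : ℂ := (z - a) / (1 - conj a * z)

lemma normSq_one_sub_conj_mul_sub_normSq_sub (a z : ℂ) :
    normSq (1 - conj a * z) - normSq (z - a) = (1 - normSq a) * (1 - normSq z) := by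
  simp only [normSq_apply, sub_re, sub_im, mul_re, mul_im, one_re, one_im, conj_re, conj_im]
  ring

lemma one_sub_conj_mul_ne_zero {a z : ℂ} (ha : ‖a‖ < 1) (hz : ‖z‖ ≤ 1) :
    1 - conj a * z ≠ 0 := by
  have : ‖conj a * z‖ < 1 := by
    rw [norm_mul, RCLike.norm_conj]
    nlinarith [norm_nonneg a, norm_nonneg z]
  intro h
  rw [← sub_eq_zero.1 h, norm_one] at this
  exact lt_irrefl _ this

lemma norm_one_sub_conj_mul_le_two {a z : ℂ} (ha : ‖a‖ ≤ 1) (hz : ‖z‖ ≤ 1) :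
    ‖1 - conj a * z‖ ≤ 2 := by
  calc ‖1 - conj a * z‖ ≤ ‖(1 : ℂ)‖ + ‖conj a * z‖ := norm_sub_le _ _
    _ ≤ 2 := by
      rw [norm_one, norm_mul, RCLike.norm_conj]
      nlinarith [norm_nonneg a, norm_nonneg z]

lemma norm_mobius_lt_one {a z : ℂ} (ha : ‖a‖ < 1) (hz : ‖z‖ < 1) : ‖mobius a z‖ < 1 := by
  have hD := one_sub_conj_mul_ne_zero ha hz.le
  rw [mobius, norm_div, div_lt_one (norm_pos_iff.2 hD),
    ← sq_lt_sq₀ (norm_nonneg _) (norm_nonneg _), ← normSq_eq_norm_sq, ← normSq_eq_norm_sq]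
  have ha' : normSq a < 1 := by rw [normSq_eq_norm_sq]; nlinarith [norm_nonneg a]
  have hz' : normSq z < 1 := by rw [normSq_eq_norm_sq]; nlinarith [norm_nonneg z]
  have := normSq_one_sub_conj_mul_sub_normSq_sub a z
  nlinarith [mul_pos (sub_pos.2 ha') (sub_pos.2 hz')]

lemma mapsTo_mobius {a : ℂ} (ha : ‖a‖ < 1) : MapsTo (mobius a) (ball 0 1) (ball 0 1) :=
  fun _ hz ↦ mem_ball_zero_iff.2 (norm_mobius_lt_one ha (mem_ball_zero_iff.1 hz))

lemma differentiableOn_mobius {a : ℂ} (ha : ‖a‖ < 1) :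
    DifferentiableOn ℂ (mobius a) (ball 0 1) :=
  (differentiableOn_id.sub_const a).div ((differentiableOn_const 1).sub
    ((differentiableOn_const _).mul differentiableOn_id))
    fun _ hz ↦ one_sub_conj_mul_ne_zero ha (mem_ball_zero_iff.1 hz).le

lemma mobius_neg_mobius {a z : ℂ} (ha : ‖a‖ < 1) (hz : ‖z‖ < 1) :
    mobius (-a) (mobius a z) = z := by
  have hD := one_sub_conj_mul_ne_zero ha hz.le
  have ha' := one_sub_conj_mul_ne_zero ha ha.le
  have hnum : (z - a) / (1 - conj a * z) + a = z * (1 - conj a * a) / (1 - conj a * z) := by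
    rw [div_add' _ _ _ hD]; ring_nf
  have hden : 1 + conj a * ((z - a) / (1 - conj a * z)) =
      (1 - conj a * a) / (1 - conj a * z) := by
    rw [← mul_div_assoc, one_add_div hD]; ring_nf
  rw [mobius, mobius, map_neg, sub_neg_eq_add, neg_mul, sub_neg_eq_add, hnum, hden,
    div_div_div_cancel_right₀ hD, mul_div_cancel_right₀ _ ha']

lemma norm_sub_le_two_mul_norm_mobius {a z : ℂ} (ha : ‖a‖ < 1) (hz : ‖z‖ ≤ 1) :
    ‖z - a‖ ≤ 2 * ‖mobius a z‖ := by
  have hD := norm_pos_iff.2 (one_sub_conj_mul_ne_zero ha hz)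
  calc ‖z - a‖ = ‖mobius a z‖ * ‖1 - conj a * z‖ := by
        rw [mobius, norm_div, div_mul_cancel₀ _ hD.ne']
    _ ≤ ‖mobius a z‖ * 2 := by
        gcongr
        exact norm_one_sub_conj_mul_le_two ha.le hz
    _ = 2 * ‖mobius a z‖ := mul_comm _ _

theorem norm_mobius_le_of_mapsTo_ball {G : ℂ → ℂ} (hd : DifferentiableOn ℂ G (ball 0 1))
    (hm : MapsTo G (ball 0 1) (ball 0 1)) {a z : ℂ} (ha : ‖a‖ < 1) (hz : ‖z‖ < 1) :
    ‖mobius (G a) (G z)‖ ≤ ‖mobius a z‖ := by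
  have hGa : ‖G a‖ < 1 := mem_ball_zero_iff.1 (hm (mem_ball_zero_iff.2 ha))
  have ha' : ‖-a‖ < 1 := by rwa [norm_neg]
  have hF0 : (mobius (G a) ∘ G ∘ mobius (-a)) 0 = 0 := by
    simp [mobius]
  have := Complex.norm_le_norm_of_mapsTo_ball
    ((differentiableOn_mobius hGa).comp (hd.comp (differentiableOn_mobius ha') (mapsTo_mobius ha'))
      (hm.comp (mapsTo_mobius ha')))
    (((mapsTo_mobius hGa).comp (hm.comp (mapsTo_mobius ha'))).mono_right ball_subset_closedBall)
    hF0 (norm_mobius_lt_one ha hz)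
  simpa [mobius_neg_mobius ha hz] using this

lemma one_add_sq_mul_norm_one_sub_le {s : ℝ} (hs : s ^ 2 ≤ 1) {w : ℂ} (hw : ‖w‖ ≤ 1) :
    (1 + s ^ 2) * ‖1 - w‖ ≤ 2 * ‖1 - (s : ℂ) ^ 2 * w‖ := by
  have hm : w.re * w.re + w.im * w.im ≤ 1 := by
    rw [← normSq_apply, normSq_eq_norm_sq]; nlinarith [norm_nonneg w]
  have hre : -1 ≤ w.re := by linarith [neg_abs_le w.re, abs_re_le_norm w]
  refine le_of_sq_le_sq ?_ (by positivity)
  rw [mul_pow, mul_pow, ← normSq_eq_norm_sq, ← normSq_eq_norm_sq]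
  simp only [normSq_apply, sub_re, sub_im, one_re, one_im, mul_re, mul_im, ← ofReal_pow,
    ofReal_re, ofReal_im]
  nlinarith [mul_nonneg (mul_nonneg (sub_nonneg.2 hs) (sub_nonneg.2 hm))
      (by positivity : (0:ℝ) ≤ 1 + 3 * s ^ 2),
    mul_nonneg (sq_nonneg (1 - s ^ 2)) (by linarith : (0:ℝ) ≤ 1 + w.re)]

lemma norm_ofReal_mul_lt_one {s : ℝ} (hs0 : 0 ≤ s) (hs1 : s ≤ 1) {x : ℂ} (hx : ‖x‖ < 1) :
    ‖(s : ℂ) * x‖ < 1 := by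
  rw [norm_mul, norm_real, Real.norm_of_nonneg hs0]
  nlinarith [norm_nonneg x]

lemma norm_mobius_mul_le {s : ℝ} (hs0 : 0 ≤ s) (hs1 : s ≤ 1) {x y : ℂ} (hx : ‖x‖ < 1)
    (hy : ‖y‖ < 1) : ‖mobius (s * x) (s * y)‖ ≤ 2 * s / (1 + s ^ 2) * ‖mobius x y‖ := by
  have hxy : ‖conj x * y‖ ≤ 1 := by
    rw [norm_mul, RCLike.norm_conj]; nlinarith [norm_nonneg x, norm_nonneg y]
  have hD := norm_pos_iff.2 (one_sub_conj_mul_ne_zero hx hy.le)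
  have hconj : conj ((s : ℂ) * x) * (s * y) = (s : ℂ) ^ 2 * (conj x * y) := by
    rw [map_mul, conj_ofReal]; ring
  have hD' : 0 < ‖1 - (s : ℂ) ^ 2 * (conj x * y)‖ := by
    rw [← hconj]
    exact norm_pos_iff.2 (one_sub_conj_mul_ne_zero (norm_ofReal_mul_lt_one hs0 hs1 hx)
      (norm_ofReal_mul_lt_one hs0 hs1 hy).le)
  have hdil := one_add_sq_mul_norm_one_sub_le (by nlinarith) hxy
  rw [mobius, mobius, hconj, ← mul_sub, norm_div, norm_div, norm_mul, norm_real,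
    Real.norm_of_nonneg hs0]
  calc s * ‖y - x‖ / ‖1 - (s : ℂ) ^ 2 * (conj x * y)‖
      ≤ s * ‖y - x‖ / ((1 + s ^ 2) * ‖1 - conj x * y‖ / 2) := by
        gcongr; linarith
    _ = 2 * s / (1 + s ^ 2) * (‖y - x‖ / ‖1 - conj x * y‖) := by
        field_simp

theorem exists_lipschitz_mobius_of_mapsTo_closedBall {g : ℂ → ℂ} {t : ℝ} (ht : t < 1)
    (hd : DifferentiableOn ℂ g (ball 0 1)) (hm : MapsTo g (ball 0 1) (closedBall 0 t)) :
    ∃ K < 1, 0 ≤ K ∧ ∀ ⦃x y : ℂ⦄, ‖x‖ < 1 → ‖y‖ < 1 →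
      ‖mobius (g x) (g y)‖ ≤ K * ‖mobius x y‖ := by
  have ht0 : 0 ≤ t := (norm_nonneg _).trans (mem_closedBall_zero_iff.1 (hm (mem_ball_self one_pos)))
  obtain ⟨s, hts, hs1⟩ := exists_between ht
  have hs0 : 0 < s := ht0.trans_lt hts
  have hgs : ∀ z, g z = s * (g z / s) := fun z ↦
    (mul_div_cancel₀ _ (ofReal_ne_zero.2 hs0.ne')).symm
  have hGm : MapsTo (fun z ↦ g z / s) (ball 0 1) (ball 0 1) := fun z hz ↦ by
    rw [mem_ball_zero_iff, norm_div, norm_real, Real.norm_of_nonneg hs0.le, div_lt_one hs0]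
    exact (mem_closedBall_zero_iff.1 (hm hz)).trans_lt hts
  refine ⟨2 * s / (1 + s ^ 2), (div_lt_one (by positivity)).2 (by nlinarith), by positivity,
    fun x y hx hy ↦ ?_⟩
  have hGx := mem_ball_zero_iff.1 (hGm (mem_ball_zero_iff.2 hx))
  have hGy := mem_ball_zero_iff.1 (hGm (mem_ball_zero_iff.2 hy))
  calc ‖mobius (g x) (g y)‖ = ‖mobius (s * (g x / s)) (s * (g y / s))‖ := by rw [← hgs, ← hgs]
    _ ≤ 2 * s / (1 + s ^ 2) * ‖mobius (g x / s) (g y / s)‖ :=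
        norm_mobius_mul_le hs0.le hs1.le hGx hGy
    _ ≤ 2 * s / (1 + s ^ 2) * ‖mobius x y‖ := by
        gcongr
        exact norm_mobius_le_of_mapsTo_ball (hd.div_const _) hGm hx hy

theorem exists_fixedPoint_of_mapsTo_closedBall {g : ℂ → ℂ} {t : ℝ} (ht : t < 1)
    (hd : DifferentiableOn ℂ g (ball 0 1)) (hm : MapsTo g (ball 0 1) (closedBall 0 t)) :
    ∃ w ∈ ball (0 : ℂ) 1, g w = w := by
  obtain ⟨K, hK1, hK0, hK⟩ := exists_lipschitz_mobius_of_mapsTo_closedBall ht hd hm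
  have htb : closedBall (0 : ℂ) t ⊆ ball 0 1 := closedBall_subset_ball ht
  set x : ℕ → ℂ := fun n ↦ g^[n] 0
  have hsucc : ∀ n, x (n + 1) = g (x n) := fun n ↦ Function.iterate_succ_apply' g n 0
  have hxt : ∀ n, x (n + 1) ∈ closedBall 0 t := fun n ↦ by
    rw [hsucc]
    induction n with
    | zero => exact hm (mem_ball_self one_pos)
    | succ n ih => exact hm (htb (hsucc n ▸ ih))
  have hx : ∀ n, ‖x n‖ < 1 := fun n ↦ by
    cases n with
    | zero => simp [x]
    | succ n => exact mem_ball_zero_iff.1 (htb (hxt n))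
  have hstep : ∀ n, ‖mobius (x n) (x (n + 1))‖ ≤ K ^ n := fun n ↦ by
    induction n with
    | zero => exact (norm_mobius_lt_one (hx 0) (hx 1)).le.trans_eq (pow_zero K).symm
    | succ n ih =>
      rw [hsucc, hsucc (n + 1), pow_succ']
      exact (hK (hx n) (hx (n + 1))).trans (mul_le_mul_of_nonneg_left ih hK0)
  have hdist : ∀ n, dist (x n) (x (n + 1)) ≤ 2 * K ^ n := fun n ↦ by
    rw [dist_comm, dist_eq_norm]
    exact (norm_sub_le_two_mul_norm_mobius (hx n) (hx (n + 1)).le).trans (by gcongr; exact hstep n)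
  obtain ⟨w, hw⟩ := cauchySeq_tendsto_of_complete (cauchySeq_of_le_geometric K 2 hK1 hdist)
  have hw' : Tendsto (fun n ↦ x (n + 1)) atTop (𝓝 w) := hw.comp (tendsto_add_atTop_nat 1)
  have hwb : w ∈ ball (0 : ℂ) 1 :=
    htb (isClosed_closedBall.mem_of_tendsto hw' (Eventually.of_forall hxt))
  refine ⟨w, hwb, tendsto_nhds_unique ?_ hw'⟩
  simp_rw [hsucc]
  exact ((hd.continuousOn.continuousAt (isOpen_ball.mem_nhds hwb)).tendsto).comp hw

theorem exists_fixedPoint_of_mapsTo_closedBall_ball {φ : ℂ → ℂ} {s : ℝ} (hs : 0 < s)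
    (hd : DifferentiableOn ℂ φ (closedBall 0 s)) (hm : MapsTo φ (closedBall 0 s) (ball 0 s)) :
    ∃ z ∈ ball (0 : ℂ) s, φ z = z := by
  obtain ⟨t, hts, ht⟩ := exists_lt_subset_ball
    ((isCompact_closedBall 0 s).image_of_continuousOn hd.continuousOn).isClosed hm.image_subset
  have hs' : (s : ℂ) ≠ 0 := ofReal_ne_zero.2 hs.ne'
  have hscale : MapsTo (fun w : ℂ ↦ (s : ℂ) * w) (ball 0 1) (closedBall 0 s) := fun w hw ↦ by
    rw [mem_closedBall_zero_iff, norm_mul, norm_real, Real.norm_of_nonneg hs.le]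
    nlinarith [mem_ball_zero_iff.1 hw]
  have hgm : MapsTo (fun w ↦ φ (s * w) / s) (ball 0 1) (closedBall 0 (t / s)) := fun w hw ↦ by
    rw [mem_closedBall_zero_iff, norm_div, norm_real, Real.norm_of_nonneg hs.le]
    gcongr
    exact (mem_ball_zero_iff.1 (ht (mem_image_of_mem φ (hscale hw)))).le
  obtain ⟨w, hw, hfix⟩ := exists_fixedPoint_of_mapsTo_closedBall ((div_lt_one hs).2 hts)
    ((hd.comp (differentiableOn_id.const_mul _) hscale).div_const _) hgm
  rw [Function.comp_apply, div_eq_iff hs', mul_comm w] at hfix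
  exact ⟨s * w, hfix ▸ hm (hscale hw), hfix⟩

theorem exists_fixedPoint_of_eventually_norm_lt {φ : ℂ → ℂ}
    (hd : DifferentiableOn ℂ φ (ball 0 1)) (hm : MapsTo φ (ball 0 1) (ball 0 1))
    (h : ∀ᶠ z in comap (‖·‖) (𝓝[<] 1), ‖φ z‖ < ‖z‖) : ∃ z ∈ ball (0 : ℂ) 1, φ z = z := by
  obtain ⟨r, hr1, hr⟩ := ((nhdsLT_basis (1 : ℝ)).comap (‖·‖ : ℂ → ℝ)).eventually_iff.1 h
  obtain ⟨M, hM1, hM⟩ := exists_lt_subset_ball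
    ((isCompact_closedBall 0 (max r 0)).image_of_continuousOn
      (hd.continuousOn.mono (closedBall_subset_ball (max_lt hr1 one_pos)))).isClosed
    (hm.mono_left (closedBall_subset_ball (max_lt hr1 one_pos))).image_subset
  obtain ⟨s, hs, hs1⟩ := exists_between (max_lt hM1 (max_lt hr1 one_pos))
  have hsM : M < s := (le_max_left _ _).trans_lt hs
  have hsr : max r 0 < s := (le_max_right _ _).trans_lt hs
  have hmaps : MapsTo φ (closedBall 0 s) (ball 0 s) := fun z hz ↦ by
    rw [mem_closedBall_zero_iff] at hz
    rcases le_or_gt ‖z‖ (max r 0) with hzr | hzr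
    · exact ball_subset_ball hsM.le (hM (mem_image_of_mem φ (mem_closedBall_zero_iff.2 hzr)))
    · exact mem_ball_zero_iff.2 ((hr ⟨(le_max_left r 0).trans_lt hzr, hz.trans_lt hs1⟩).trans_le hz)
  obtain ⟨z, hz, hfix⟩ := exists_fixedPoint_of_mapsTo_closedBall_ball
    ((le_max_right r 0).trans_lt hsr) (hd.mono (closedBall_subset_ball hs1)) hmaps
  exact ⟨z, ball_subset_ball hs1.le hz, hfix⟩

theorem exists_norm_eq_one_apply_eq_zero_of_tendsto {ψ : ℂ → ℂ}
    (hψ : ContinuousOn ψ (closedBall 0 1)) {F : Filter ℂ} [F.NeBot]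
    (hF : F ≤ comap (‖·‖) (𝓝[<] 1)) (hψF : Tendsto ψ F (𝓝 0)) :
    ∃ ζ, ‖ζ‖ = 1 ∧ ψ ζ = 0 := by
  have hFball : F ≤ 𝓟 (closedBall 0 1) := le_principal_iff.2 <| mem_of_superset
    (hF (preimage_mem_comap self_mem_nhdsWithin)) fun z hz ↦ mem_closedBall_zero_iff.2 (le_of_lt hz)
  obtain ⟨ζ, hζ, hcl⟩ := isCompact_closedBall (0 : ℂ) 1 hFball
  have := hcl.neBot
  have hnorm : Tendsto (‖·‖) F (𝓝 (1 : ℝ)) :=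
    (tendsto_comap.mono_left hF).mono_right nhdsWithin_le_nhds
  exact ⟨ζ, tendsto_nhds_unique ((continuous_norm.tendsto ζ).mono_left inf_le_left)
      (hnorm.mono_left inf_le_right),
    tendsto_nhds_unique ((hψ ζ hζ).tendsto.mono_left (inf_le_inf_left _ hFball))
      (hψF.mono_left inf_le_right)⟩

theorem stmt_18_general (ψ φ : ℂ → ℂ) (α : ℝ)
    (hα : α ∈ Set.Ioo (0:ℝ) 1)
    (hψc : ContinuousOn ψ (closedBall (0:ℂ) 1))
    (hφ : DifferentiableOn ℂ φ (ball (0:ℂ) 1))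
    (hmap : Set.MapsTo φ (ball (0:ℂ) 1) (ball (0:ℂ) 1))
    (hnf : ∀ z ∈ ball (0:ℂ) 1, φ z ≠ z)
    (hlim : ∀ ε : ℝ, 0 < ε → ∃ r : ℝ, r < 1 ∧ ∀ z ∈ ball (0:ℂ) 1, r < ‖z‖ →
      ‖ψ z‖ * ((1 - ‖z‖^2) / (1 - ‖φ z‖^2)) ^ (α / 2) < ε) :
    ∃ ζ : ℂ, ‖ζ‖ = 1 ∧ ψ ζ = 0 := by
  have hfreq : ∃ᶠ z in comap (‖·‖) (𝓝[<] 1), ‖z‖ ≤ ‖φ z‖ := fun h ↦ by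
    obtain ⟨z, hz, hfix⟩ :=
      exists_fixedPoint_of_eventually_norm_lt hφ hmap (h.mono fun _ ↦ not_le.1)
    exact hnf z hz hfix
  have := frequently_iff_neBot.1 hfreq
  refine exists_norm_eq_one_apply_eq_zero_of_tendsto hψc
    (F := comap (‖·‖) (𝓝[<] 1) ⊓ 𝓟 {z | ‖z‖ ≤ ‖φ z‖}) inf_le_left
    (tendsto_zero_iff_norm_tendsto_zero.2 (tendsto_order.2 ⟨fun a ha ↦
      Eventually.of_forall fun z ↦ ha.trans_le (norm_nonneg _), fun ε hε ↦ ?_⟩))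
  obtain ⟨r, hr1, hr⟩ := hlim ε hε
  filter_upwards [mem_inf_of_left (preimage_mem_comap (Ioo_mem_nhdsLT hr1)),
    mem_inf_of_right (mem_principal_self _)] with z ⟨hrz, hz1⟩ (hzφ : ‖z‖ ≤ ‖φ z‖)
  have hφz : ‖φ z‖ < 1 := mem_ball_zero_iff.1 (hmap (mem_ball_zero_iff.2 hz1))
  have hweight : 1 ≤ ((1 - ‖z‖ ^ 2) / (1 - ‖φ z‖ ^ 2)) ^ (α / 2) := by
    refine Real.one_le_rpow ((one_le_div (by nlinarith [norm_nonneg (φ z)])).2 ?_)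
      (by linarith [hα.1])
    nlinarith [norm_nonneg z]
  exact (le_mul_of_one_le_right (norm_nonneg _) hweight).trans_lt
    (hr z (mem_ball_zero_iff.2 hz1) hrz)

theorem stmt_18 (ψ φ : ℂ → ℂ) (α : ℝ)
    (hα : α ∈ Set.Ioo (0:ℝ) 1)
    (hψc : ContinuousOn ψ (closedBall (0:ℂ) 1))
    (hψd : DifferentiableOn ℂ ψ (ball (0:ℂ) 1))
    (hφ : DifferentiableOn ℂ φ (ball (0:ℂ) 1))
    (hmap : Set.MapsTo φ (ball (0:ℂ) 1) (ball (0:ℂ) 1))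
    (hnf : ∀ z ∈ ball (0:ℂ) 1, φ z ≠ z)
    (hlim : ∀ ε : ℝ, 0 < ε → ∃ r : ℝ, r < 1 ∧ ∀ z ∈ ball (0:ℂ) 1, r < ‖z‖ →
      ‖ψ z‖ * ((1 - ‖z‖^2) / (1 - ‖φ z‖^2)) ^ (α / 2) < ε) :
    ∃ ζ : ℂ, ‖ζ‖ = 1 ∧ ψ ζ = 0 :=
  stmt_18_general ψ φ α hα hψc hφ hmap hnf hlim
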